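/- arXiv:1004.3227 — 5 statements merged into one kernel-verified Lean document; each statement's English description precedes it below -/
import Mathlib

section
/- For every κ ∈ C, the Lebesgue volume of Δ(κ) equals V(κ) = (1/k!) h(κ) λ(κ)^k − (1/(k+1)!) (∑_{i=1}^k a_i) λ(κ)^{k+1}. -/
open MeasureTheory Finset
open scoped Pointwise Classical

noncomputable section

namespace ToricStmt

/-- Euclidean `n`-space. -/
abbrev E (n : ℕ) : Type := EuclideanSpace ℝ (Fin n)

/-- The real vector associated to an integer vector. -/
def iv {n : ℕ} (g : Fin n → ℤ) : E n := WithLp.toLp 2 (fun t => (g t : ℝ))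

/-- The standard pairing/dot product. -/
def dot {n : ℕ} (u v : E n) : ℝ := ∑ i, u i * v i

/-- An integer vector is primitive if the gcd of its coordinates is `1`. -/
def IsPrimitive {n : ℕ} (g : Fin n → ℤ) : Prop := Finset.univ.gcd g = 1

/-- The polytope `Δ(κ) = {x : ⟨η i, x⟩ ≤ κ i for all i}`. -/
def Delta {n N : ℕ} (η : Fin N → Fin n → ℤ) (κ : Fin N → ℝ) : Set (E n) :=
  {x | ∀ i, dot (iv (η i)) x ≤ κ i}

/-- The face `F_I(κ)` of `Δ(κ)`. -/
def Face {n N : ℕ} (η : Fin N → Fin n → ℤ) (κ : Fin N → ℝ) (I : Finset (Fin N)) :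
    Set (E n) :=
  {x | x ∈ Delta η κ ∧ ∀ i ∈ I, dot (iv (η i)) x = κ i}

/-- A vertex of `Δ(κ)` is a point which is a face. -/
def IsVertex {n N : ℕ} (η : Fin N → Fin n → ℤ) (κ : Fin N → ℝ) (x : E n) : Prop :=
  ∃ I : Finset (Fin N), Face η κ I = {x}

/-- The dimension of (the affine hull of) a subset of `E n`. -/
def faceDim {n : ℕ} (F : Set (E n)) : ℕ := Module.finrank ℝ (vectorSpan ℝ F)

/-- The set of constraints active at `x`. -/
def activeIdx {n N : ℕ} (η : Fin N → Fin n → ℤ) (κ : Fin N → ℝ) (x : E n) :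
    Finset (Fin N) :=
  Finset.univ.filter fun i => dot (iv (η i)) x = κ i

/-- `Δ(κ)` is a smooth polytope: compact with nonempty interior, all facets of
dimension `n - 1`, and at each vertex exactly `n` facets meet, whose conormals form a
`ℤ`-basis of `ℤⁿ`. -/
def IsSmoothPolytope {n N : ℕ} (η : Fin N → Fin n → ℤ) (κ : Fin N → ℝ) : Prop :=
  IsCompact (Delta η κ) ∧ (interior (Delta η κ)).Nonempty ∧
  (∀ i, faceDim (Face η κ {i}) = n - 1) ∧
  ∀ x, IsVertex η κ x →
    (activeIdx η κ x).card = n ∧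
    Submodule.span ℤ (↑((activeIdx η κ x).image η) : Set (Fin n → ℤ)) = ⊤

/-- A chamber neighbourhood of `κ`: an open connected set of support constants containing
`κ` on which the polytope stays smooth with the same combinatorics. -/
def IsChamberNbhd {n N : ℕ} (η : Fin N → Fin n → ℤ) (κ : Fin N → ℝ)
    (U : Set (Fin N → ℝ)) : Prop :=
  IsOpen U ∧ IsConnected U ∧ κ ∈ U ∧
  ∀ κ' ∈ U, IsSmoothPolytope η κ' ∧
    ∀ I : Finset (Fin N), ((Face η κ' I).Nonempty ↔ (Face η κ I).Nonempty)

/-- The barycenter of `Δ(κ)` with respect to Lebesgue measure. -/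
def bary {n N : ℕ} (η : Fin N → Fin n → ℤ) (κ : Fin N → ℝ) : E n :=
  (volume (Delta η κ)).toReal⁻¹ • ∫ x in Delta η κ, x

/-- `H` is mass linear on `U` with coefficients `γ`. -/
def MassLinearOn {n N : ℕ} (η : Fin N → Fin n → ℤ) (H : E n)
    (U : Set (Fin N → ℝ)) (γ : Fin N → ℝ) : Prop :=
  ∀ κ' ∈ U, dot H (bary η κ') = ∑ i, γ i * κ' i

/-- `v` and `w` are the two endpoints of an edge (a one-dimensional face) of `Δ(κ)`. -/
def IsEdgeBetween {n N : ℕ} (η : Fin N → Fin n → ℤ) (κ : Fin N → ℝ)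
    (v w : E n) : Prop :=
  v ≠ w ∧ IsVertex η κ v ∧ IsVertex η κ w ∧
  ∃ I : Finset (Fin N), Face η κ I = segment ℝ v w

/-- Conormals of the `Δ_k`-bundle over the `1`-simplex determined by `a ∈ ℤᵏ`:
`η_i = -e_i` for `i ≤ k`, `η_{k+1} = e_1 + ⋯ + e_k`, `η_{k+2} = -e_{k+1}`,
`η_{k+3} = e_{k+1} + ∑ a_i e_i`. -/
def bEta (k : ℕ) (a : Fin k → ℤ) : Fin (k + 3) → Fin (k + 1) → ℤ := fun j t =>
  if (j : ℕ) < k then (if (t : ℕ) = (j : ℕ) then -1 else 0)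
  else if (j : ℕ) = k then (if (t : ℕ) < k then 1 else 0)
  else if (j : ℕ) = k + 1 then (if (t : ℕ) = k then -1 else 0)
  else (if ht : (t : ℕ) < k then a ⟨(t : ℕ), ht⟩ else 1)

/-- `λ(κ) = κ_1 + ⋯ + κ_{k+1}`. -/
def lamF (k : ℕ) (κ : Fin (k + 3) → ℝ) : ℝ :=
  ∑ i : Fin (k + 1), κ (Fin.castLE (by omega) i)

/-- `h(κ) = κ_{k+2} + κ_{k+3} + ∑ a_i κ_i`. -/
def hF (k : ℕ) (a : Fin k → ℤ) (κ : Fin (k + 3) → ℝ) : ℝ :=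
  κ ⟨k + 1, by omega⟩ + κ ⟨k + 2, by omega⟩ +
    ∑ i : Fin k, (a i : ℝ) * κ (Fin.castLE (by omega) i)

/-- The chamber of the `Δ_k`-bundle over the `1`-simplex. -/
def chamber (k : ℕ) (a : Fin k → ℤ) : Set (Fin (k + 3) → ℝ) :=
  {κ | 0 < lamF k κ ∧ 0 < hF k a κ ∧
       ∀ i : Fin k, 0 < hF k a κ - lamF k κ * (a i : ℝ)}

/-! Translating the vertex of `Δ(κ)` where the facets `1, …, k, k + 2` meet to the origin turns
`Δ(κ)` into the region `0 ≤ t ≤ h - ∑ aⱼ uⱼ` over the corner simplex `{u ≥ 0, ∑ uⱼ ≤ λ}`; the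
chamber inequalities make this height nonnegative there. By Cavalieri the volume is
`∫ (h - ∑ aⱼ uⱼ)` over the simplex, and slicing off one coordinate at a time gives the moments
`∫ (λ - ∑ uⱼ)ᵐ / m! = λⁿ⁺ᵐ / (n + m)!`, hence `vol = λᵏ / k!` and `∫ uⱼ = λᵏ⁺¹ / (k + 1)!`. -/

open scoped ENNReal Nat

lemma lintegral_eq_lintegral_insertNth {n : ℕ} (i : Fin (n + 1))
    {f : (Fin (n + 1) → ℝ) → ℝ≥0∞} (hf : Measurable f) :
    ∫⁻ x, f x = ∫⁻ y : Fin n → ℝ, ∫⁻ t : ℝ, f (i.insertNth t y) := by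
  have he := (volume_preserving_piFinSuccAbove (fun _ : Fin (n + 1) => ℝ) i).symm
  rw [← he.lintegral_comp hf]
  exact lintegral_prod_symm _ (hf.comp he.measurable).aemeasurable

lemma setLIntegral_eq_setLIntegral_fiber {n : ℕ} (i : Fin (n + 1)) {s : Set (Fin (n + 1) → ℝ)}
    (hs : MeasurableSet s) {A : Set (Fin n → ℝ)} (hA : MeasurableSet A)
    {I : (Fin n → ℝ) → Set ℝ} (hI : ∀ y, MeasurableSet (I y))
    (hsI : ∀ t y, i.insertNth t y ∈ s ↔ y ∈ A ∧ t ∈ I y)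
    {f : (Fin (n + 1) → ℝ) → ℝ≥0∞} (hf : Measurable f) :
    ∫⁻ x in s, f x = ∫⁻ y in A, ∫⁻ t in I y, f (i.insertNth t y) := by
  rw [← lintegral_indicator hs, lintegral_eq_lintegral_insertNth i (hf.indicator hs),
    ← lintegral_indicator hA]
  refine lintegral_congr fun y => ?_
  by_cases hy : y ∈ A
  · rw [Set.indicator_of_mem hy, ← lintegral_indicator (hI y)]
    simp only [Set.indicator_apply, hsI, hy, true_and]
  · simp [hsI, hy]

lemma setLIntegral_Icc_ofReal {f : ℝ → ℝ} {a b : ℝ} (hab : a ≤ b)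
    (hf : ContinuousOn f (Set.Icc a b)) (hf₀ : ∀ t ∈ Set.Icc a b, 0 ≤ f t) :
    ∫⁻ t in Set.Icc a b, ENNReal.ofReal (f t) = ENNReal.ofReal (∫ t in a..b, f t) := by
  rw [intervalIntegral.integral_of_le hab, ← integral_Icc_eq_integral_Ioc,
    ofReal_integral_eq_lintegral_ofReal hf.integrableOn_Icc
      ((ae_restrict_iff' measurableSet_Icc).2 (.of_forall hf₀))]

lemma integral_sub_pow_div_factorial (m : ℕ) (M : ℝ) :
    ∫ t in (0 : ℝ)..M, (M - t) ^ m / m ! = M ^ (m + 1) / (m + 1)! := by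
  rw [intervalIntegral.integral_comp_sub_left (fun t => t ^ m / m !), sub_self, sub_zero,
    intervalIntegral.integral_div, integral_pow, Nat.factorial_succ]
  push_cast
  field_simp
  ring

section CornerSimplex

variable {n : ℕ} {r : ℝ}

def cornerSimplex (n : ℕ) (r : ℝ) : Set (Fin n → ℝ) := {x | (∀ i, 0 ≤ x i) ∧ ∑ i, x i ≤ r}

lemma isClosed_cornerSimplex : IsClosed (cornerSimplex n r) := by
  simp only [cornerSimplex, Set.ofPred_and, Set.ofPred_forall]
  exact (isClosed_iInter fun i => isClosed_le continuous_const (continuous_apply i)).inter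
    (isClosed_le (continuous_finsetSum _ fun i _ => continuous_apply i) continuous_const)

lemma measurableSet_cornerSimplex : MeasurableSet (cornerSimplex n r) :=
  isClosed_cornerSimplex.measurableSet

lemma isCompact_cornerSimplex : IsCompact (cornerSimplex n r) :=
  (isCompact_Icc (a := 0) (b := fun _ => r)).of_isClosed_subset isClosed_cornerSimplex
    fun _ hx => ⟨hx.1, fun i => (single_le_sum (fun j _ => hx.1 j) (mem_univ i)).trans hx.2⟩

lemma insertNth_mem_cornerSimplex_iff (i : Fin (n + 1)) (t : ℝ) (y : Fin n → ℝ) :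
    i.insertNth t y ∈ cornerSimplex (n + 1) r ↔
      y ∈ cornerSimplex n r ∧ t ∈ Set.Icc 0 (r - ∑ j, y j) := by
  simp only [cornerSimplex, Set.mem_ofPred_eq, Set.mem_Icc, i.forall_iff_succAbove,
    Fin.insertNth_apply_same, Fin.insertNth_apply_succAbove, Fin.sum_insertNth]
  constructor
  · rintro ⟨⟨ht, hy⟩, hsum⟩
    exact ⟨⟨hy, by linarith⟩, ht, by linarith⟩
  · rintro ⟨⟨hy, -⟩, ht, htr⟩
    exact ⟨⟨ht, hy⟩, by linarith⟩

lemma setLIntegral_cornerSimplex_succ (i : Fin (n + 1)) {f : (Fin (n + 1) → ℝ) → ℝ≥0∞}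
    (hf : Measurable f) :
    ∫⁻ x in cornerSimplex (n + 1) r, f x =
      ∫⁻ y in cornerSimplex n r, ∫⁻ t in Set.Icc 0 (r - ∑ j, y j), f (i.insertNth t y) :=
  setLIntegral_eq_setLIntegral_fiber i measurableSet_cornerSimplex measurableSet_cornerSimplex
    (fun _ => measurableSet_Icc) (insertNth_mem_cornerSimplex_iff i) hf

lemma lintegral_cornerSimplex_sub_sum_pow (n m : ℕ) (hr : 0 ≤ r) :
    ∫⁻ x in cornerSimplex n r, ENNReal.ofReal ((r - ∑ i, x i) ^ m / m !) =
      ENNReal.ofReal (r ^ (n + m) / (n + m)!) := by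
  induction n generalizing m with
  | zero =>
    have huniv : cornerSimplex 0 r = Set.univ := by
      ext x
      simp [cornerSimplex, hr]
    simp [huniv, volume_pi]
  | succ n ih =>
    have hf : Measurable fun x : Fin (n + 1) → ℝ =>
        ENNReal.ofReal ((r - ∑ i, x i) ^ m / m !) := by
      fun_prop
    rw [setLIntegral_cornerSimplex_succ 0 hf, show n + 1 + m = n + (m + 1) by ring,
      ← ih (m + 1)]
    refine setLIntegral_congr_fun measurableSet_cornerSimplex fun y hy => ?_
    have hM : 0 ≤ r - ∑ j, y j := sub_nonneg.2 hy.2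
    simp only [Fin.sum_insertNth, sub_add_eq_sub_sub_swap]
    rw [setLIntegral_Icc_ofReal hM (Continuous.continuousOn (by fun_prop)) fun t ht =>
        div_nonneg (pow_nonneg (sub_nonneg.2 ht.2) m) (by positivity),
      integral_sub_pow_div_factorial]

lemma volume_cornerSimplex (hr : 0 ≤ r) :
    volume (cornerSimplex n r) = ENNReal.ofReal (r ^ n / n !) := by
  simpa using lintegral_cornerSimplex_sub_sum_pow n 0 hr

lemma lintegral_cornerSimplex_apply (i : Fin n) (hr : 0 ≤ r) :
    ∫⁻ x in cornerSimplex n r, ENNReal.ofReal (x i) =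
      ENNReal.ofReal (r ^ (n + 1) / (n + 1)!) := by
  cases n with
  | zero => exact i.elim0
  | succ n =>
    rw [setLIntegral_cornerSimplex_succ i (by fun_prop),
      ← lintegral_cornerSimplex_sub_sum_pow n 2 hr]
    refine setLIntegral_congr_fun measurableSet_cornerSimplex fun y hy => ?_
    simp only [Fin.insertNth_apply_same]
    rw [setLIntegral_Icc_ofReal (f := fun t => t) (sub_nonneg.2 hy.2) continuousOn_id
      fun t ht => ht.1, integral_id]
    norm_num [Nat.factorial]

lemma integral_cornerSimplex_apply (i : Fin n) (hr : 0 ≤ r) :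
    ∫ x in cornerSimplex n r, x i = r ^ (n + 1) / (n + 1)! := by
  rw [integral_eq_lintegral_of_nonneg_ae
      ((ae_restrict_iff' measurableSet_cornerSimplex).2 (.of_forall fun x hx => hx.1 i))
      (measurable_pi_apply i).aestronglyMeasurable,
    lintegral_cornerSimplex_apply i hr, ENNReal.toReal_ofReal (by positivity)]

lemma integral_cornerSimplex_sub_linear (c : ℝ) (b : Fin n → ℝ) (hr : 0 ≤ r) :
    ∫ x in cornerSimplex n r, (c - ∑ j, b j * x j) =
      c * (r ^ n / n !) - (∑ j, b j) * (r ^ (n + 1) / (n + 1)!) := by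
  have hint : ∀ j, IntegrableOn (fun x : Fin n → ℝ => b j * x j) (cornerSimplex n r) := fun j =>
    (Continuous.continuousOn (by fun_prop)).integrableOn_compact isCompact_cornerSimplex
  have hconst : IntegrableOn (fun _ => c) (cornerSimplex n r) :=
    integrableOn_const isCompact_cornerSimplex.measure_lt_top.ne
  rw [integral_sub hconst (integrable_finsetSum _ fun j _ => hint j),
    setIntegral_const, integral_finsetSum _ fun j _ => hint j, measureReal_def,
    volume_cornerSimplex hr, ENNReal.toReal_ofReal (by positivity), smul_eq_mul, sum_mul]
  simp only [integral_const_mul, integral_cornerSimplex_apply _ hr]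
  ring

lemma sum_mul_le_of_mem_cornerSimplex {b : Fin n → ℝ} {c : ℝ} {x : Fin n → ℝ}
    (hx : x ∈ cornerSimplex n r) (hr : 0 < r) (hc : 0 ≤ c) (hb : ∀ j, b j * r ≤ c) :
    ∑ j, b j * x j ≤ c := by
  refine le_of_mul_le_mul_right ?_ hr
  calc (∑ j, b j * x j) * r = ∑ j, b j * r * x j := by
        rw [sum_mul]; exact sum_congr rfl fun j _ => by ring
    _ ≤ ∑ j, c * x j := sum_le_sum fun j _ => mul_le_mul_of_nonneg_right (hb j) (hx.1 j)
    _ = c * ∑ j, x j := (mul_sum _ _ _).symm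
    _ ≤ c * r := mul_le_mul_of_nonneg_left hx.2 hc

end CornerSimplex

lemma dot_iv_apply {n : ℕ} (g : Fin n → ℤ) (x : E n) : dot (iv g) x = ∑ t, (g t : ℝ) * x t := by
  simp [dot, iv]

lemma measurableSet_delta {n N : ℕ} (η : Fin N → Fin n → ℤ) (κ : Fin N → ℝ) :
    MeasurableSet (Delta η κ) := by
  refine IsClosed.measurableSet ?_
  simp only [Delta, Set.ofPred_forall]
  exact isClosed_iInter fun i => isClosed_le (by unfold dot; fun_prop) continuous_const

section Bundle

variable {k : ℕ} (a : Fin k → ℤ)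

lemma dot_bEta_castLE (j : Fin k) (x : E (k + 1)) :
    dot (iv (bEta k a (Fin.castLE (by omega) j))) x = -x j.castSucc := by
  rw [dot_iv_apply, Fin.sum_univ_castSucc]
  simp [bEta, Fin.val_eq_val, j.isLt.ne']

lemma dot_bEta_k (x : E (k + 1)) :
    dot (iv (bEta k a ⟨k, by omega⟩)) x = ∑ j : Fin k, x j.castSucc := by
  rw [dot_iv_apply, Fin.sum_univ_castSucc]
  simp [bEta]

lemma dot_bEta_k_add_one (x : E (k + 1)) :
    dot (iv (bEta k a ⟨k + 1, by omega⟩)) x = -x (Fin.last k) := by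
  rw [dot_iv_apply, Fin.sum_univ_castSucc]
  simp [bEta, Nat.ne_of_lt]

lemma dot_bEta_k_add_two (x : E (k + 1)) :
    dot (iv (bEta k a ⟨k + 2, by omega⟩)) x =
      x (Fin.last k) + ∑ j : Fin k, (a j : ℝ) * x j.castSucc := by
  rw [dot_iv_apply, Fin.sum_univ_castSucc, add_comm]
  simp [bEta]

lemma mem_delta_bEta_iff (κ : Fin (k + 3) → ℝ) (x : E (k + 1)) :
    x ∈ Delta (bEta k a) κ ↔
      (∀ j : Fin k, -x j.castSucc ≤ κ (Fin.castLE (by omega) j)) ∧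
      ∑ j : Fin k, x j.castSucc ≤ κ ⟨k, by omega⟩ ∧
      -x (Fin.last k) ≤ κ ⟨k + 1, by omega⟩ ∧
      x (Fin.last k) + ∑ j : Fin k, (a j : ℝ) * x j.castSucc ≤ κ ⟨k + 2, by omega⟩ := by
  simp only [Delta, Set.mem_ofPred_eq, Fin.forall_fin_succ', and_assoc]
  refine and_congr (forall_congr' fun j => ?_) (and_congr ?_ (and_congr ?_ ?_))
  · rw [show j.castSucc.castSucc.castSucc = Fin.castLE (by omega) j from rfl, dot_bEta_castLE]
  · rw [show (Fin.last k).castSucc.castSucc = ⟨k, by omega⟩ from rfl, dot_bEta_k]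
  · rw [show (Fin.last (k + 1)).castSucc = ⟨k + 1, by omega⟩ from rfl, dot_bEta_k_add_one]
  · rw [show Fin.last (k + 2) = ⟨k + 2, by omega⟩ from rfl, dot_bEta_k_add_two]

lemma lamF_eq_sum_add (κ : Fin (k + 3) → ℝ) :
    lamF k κ = ∑ j : Fin k, κ (Fin.castLE (by omega) j) + κ ⟨k, by omega⟩ :=
  Fin.sum_univ_castSucc _

/-- The vertex of `Δ(κ)` cut out by the facets `1, …, k` and `k + 2`. -/
def bundleVertex (k : ℕ) (κ : Fin (k + 3) → ℝ) : Fin (k + 1) → ℝ :=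
  Fin.snoc (fun j : Fin k => -κ (Fin.castLE (by omega) j)) (-κ ⟨k + 1, by omega⟩)

lemma toLp_insertNth_add_mem_delta_iff (κ : Fin (k + 3) → ℝ) (t : ℝ) (y : Fin k → ℝ) :
    WithLp.toLp 2 ((Fin.last k).insertNth t y + bundleVertex k κ) ∈ Delta (bEta k a) κ ↔
      y ∈ cornerSimplex k (lamF k κ) ∧ t ∈ Set.Icc 0 (hF k a κ - ∑ j, (a j : ℝ) * y j) := by
  rw [mem_delta_bEta_iff, lamF_eq_sum_add]
  simp only [Pi.add_apply, Fin.insertNth_last', Fin.snoc_castSucc, Fin.snoc_last,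
    bundleVertex, cornerSimplex, Set.mem_ofPred_eq, Set.mem_Icc, hF, ← sub_eq_add_neg,
    sum_sub_distrib, mul_sub]
  have hcoord : ∀ j,
      -(y j - κ (Fin.castLE (by omega) j)) ≤ κ (Fin.castLE (by omega) j) ↔ 0 ≤ y j :=
    fun j => by constructor <;> intro h <;> linarith
  simp only [hcoord]
  constructor
  · rintro ⟨hy, hs, ht₀, ht₁⟩
    exact ⟨⟨hy, by linarith⟩, by linarith, by linarith⟩
  · rintro ⟨⟨hy, hs⟩, ht₀, ht₁⟩
    exact ⟨hy, by linarith, by linarith, by linarith⟩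

lemma volume_delta_bEta (κ : Fin (k + 3) → ℝ) :
    volume (Delta (bEta k a) κ) =
      ∫⁻ y in cornerSimplex k (lamF k κ), ENNReal.ofReal (hF k a κ - ∑ j, (a j : ℝ) * y j) := by
  have hφ : MeasurePreserving fun u : Fin (k + 1) → ℝ => WithLp.toLp 2 (u + bundleVertex k κ) :=
    (PiLp.volume_preserving_toLp (Fin (k + 1))).comp (measurePreserving_add_right volume _)
  rw [← hφ.measure_preimage (measurableSet_delta _ _).nullMeasurableSet, ← setLIntegral_one,
    setLIntegral_eq_setLIntegral_fiber (Fin.last k) (hφ.measurable (measurableSet_delta _ _))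
      measurableSet_cornerSimplex (fun _ => measurableSet_Icc)
      (toLp_insertNth_add_mem_delta_iff a κ) measurable_const]
  simp only [setLIntegral_one, Real.volume_Icc, sub_zero]

end Bundle

theorem stmt4_general (k : ℕ) (a : Fin k → ℤ) :
    ∀ κ ∈ chamber k a,
      (volume (Delta (bEta k a) κ)).toReal =
        (1 / (Nat.factorial k : ℝ)) * hF k a κ * (lamF k κ) ^ k -
        (1 / (Nat.factorial (k + 1) : ℝ)) * (∑ i, (a i : ℝ)) * (lamF k κ) ^ (k + 1) := by
  rintro κ ⟨hlam, hh, hha⟩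
  have hnonneg : ∀ y ∈ cornerSimplex k (lamF k κ), 0 ≤ hF k a κ - ∑ j, (a j : ℝ) * y j :=
    fun y hy => sub_nonneg.2 <|
      sum_mul_le_of_mem_cornerSimplex hy hlam hh.le fun j => by linarith [hha j]
  rw [volume_delta_bEta, ← integral_eq_lintegral_of_nonneg_ae
      ((ae_restrict_iff' measurableSet_cornerSimplex).2 (.of_forall hnonneg))
      (Continuous.aestronglyMeasurable (by fun_prop)),
    integral_cornerSimplex_sub_linear _ _ hlam.le]
  ring

/-- The volume of the `Δ_k`-bundle over the `1`-simplex determined by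
`a` is `V(κ) = (1/k!) h(κ) λ(κ)^k − (1/(k+1)!) (∑ a_i) λ(κ)^{k+1}` on the chamber. -/
theorem stmt4 (k : ℕ) (hk : 1 ≤ k) (a : Fin k → ℤ) :
    ∀ κ ∈ chamber k a,
      (volume (Delta (bEta k a) κ)).toReal =
        (1 / (Nat.factorial k : ℝ)) * hF k a κ * (lamF k κ) ^ k -
        (1 / (Nat.factorial (k + 1) : ℝ)) * (∑ i, (a i : ℝ)) * (lamF k κ) ^ (k + 1) :=
  stmt4_general k a

end ToricStmt
end
end

section
/- No point w ∈ ℤ⁶ satisfies the star-Ewald condition for the vertex z; that is, there is no w ∈ ℤ⁶ \ {0} with w ∈ Δ and −w ∈ Δ such that ⟨η_i, w⟩ = 1 for exactly one index i ∈ S and ⟨η_i, −w⟩ ≠ 1 for every i ∈ S. Hence Δ fails the star-Ewald condition at z. -/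
open Finset

noncomputable section

namespace ToricStmt

/-- The conormals of Paffenholz's 6-dimensional monotone polytope. -/
def eta6 : Fin 9 → Fin 6 → ℤ :=
  ![![-1, 0, 0, 0, 0, 0], ![0, -1, 0, 0, 0, 0], ![0, 0, -1, 0, 0, 0],
    ![0, 0, 0, -1, 0, 0], ![0, 0, 0, 0, -1, 0], ![0, 0, 0, 0, 0, -1],
    ![0, 0, 0, 0, 0, 1], ![1, 1, 0, 0, 1, 3], ![0, 0, 1, 1, 1, 2]]

/-- The polytope `Δ = {x : ⟨η_i, x⟩ ≤ 1, i = 1,…,9}`. -/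
def Delta6 : Set (Fin 6 → ℝ) := {x | ∀ i, ∑ j, (eta6 i j : ℝ) * x j ≤ 1}

/-- The indices of the facets through the vertex `z = (-1,-1,-1,-1,3,0)`. -/
def SE : Finset (Fin 9) := {0, 1, 2, 3, 7, 8}

lemma six5 {α : Type*} (a b c d e f : α) : ![a,b,c,d,e,f] (5:Fin 6) = f := rfl
lemma nine5 {α : Type*} (a b c d e f g h i : α) : ![a,b,c,d,e,f,g,h,i] (5:Fin 9) = f := rfl
lemma nine6 {α : Type*} (a b c d e f g h i : α) : ![a,b,c,d,e,f,g,h,i] (6:Fin 9) = g := rfl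
lemma nine7 {α : Type*} (a b c d e f g h i : α) : ![a,b,c,d,e,f,g,h,i] (7:Fin 9) = h := rfl
lemma nine8 {α : Type*} (a b c d e f g h i : α) : ![a,b,c,d,e,f,g,h,i] (8:Fin 9) = i := rfl

/-- No `w ∈ ℤ⁶` satisfies the star-Ewald condition at the vertex
`z = F_{123489}` of Paffenholz's polytope: there is no nonzero integral `w` with
`±w ∈ Δ` such that `⟨η_i, w⟩ = 1` for exactly one `i ∈ S` and `⟨η_i, -w⟩ ≠ 1` for all
`i ∈ S`.  Hence `Δ` fails the star-Ewald condition at `z`. -/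
theorem stmt6 :
    ¬ ∃ w : Fin 6 → ℤ, w ≠ 0 ∧
      (fun j => (w j : ℝ)) ∈ Delta6 ∧ (fun j => -(w j : ℝ)) ∈ Delta6 ∧
      (∃! i : Fin 9, i ∈ SE ∧ ∑ j, eta6 i j * w j = 1) ∧
      (∀ i ∈ SE, ∑ j, eta6 i j * (-(w j)) ≠ 1) := by
  rintro ⟨w, -, hin, hnin, ⟨i, ⟨hiS, hival⟩, huni⟩, hneg⟩
  have hA : ∀ i : Fin 9, ∑ j, eta6 i j * w j ≤ 1 := by
    intro i
    have h := hin i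
    have h' : ((∑ j, eta6 i j * w j : ℤ) : ℝ) ≤ 1 := by push_cast; exact h
    exact_mod_cast h'
  have hB : ∀ i : Fin 9, ∑ j, eta6 i j * (-(w j)) ≤ 1 := by
    intro i
    have h := hnin i
    have h' : ((∑ j, eta6 i j * (-(w j)) : ℤ) : ℝ) ≤ 1 := by push_cast; exact h
    exact_mod_cast h'
  have a0 := hA 0; have a1 := hA 1; have a2 := hA 2; have a3 := hA 3
  have a4 := hA 4; have a5 := hA 5; have a6 := hA 6; have a7 := hA 7; have a8 := hA 8
  have b0 := hB 0; have b1 := hB 1; have b2 := hB 2; have b3 := hB 3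
  have b4 := hB 4; have b5 := hB 5; have b6 := hB 6; have b7 := hB 7; have b8 := hB 8
  have n0 := hneg 0 (by decide); have n1 := hneg 1 (by decide)
  have n2 := hneg 2 (by decide); have n3 := hneg 3 (by decide)
  have n7 := hneg 7 (by decide); have n8 := hneg 8 (by decide)
  simp only [eta6, Fin.sum_univ_six, Matrix.cons_val_zero, Matrix.cons_val_one,
    Matrix.head_cons, Matrix.cons_val_two, Matrix.cons_val_three, Matrix.cons_val_four,
    Matrix.head_fin_const, Matrix.tail_cons, six5, nine5, nine6, nine7, nine8]
    at a0 a1 a2 a3 a4 a5 a6 a7 a8 b0 b1 b2 b3 b4 b5 b6 b7 b8 n0 n1 n2 n3 n7 n8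
  have hu : ∀ j, j ∈ SE → j ≠ i → ∑ k, eta6 j k * w k ≠ 1 :=
    fun j hj hne h => hne (huni j ⟨hj, h⟩)
  simp only [SE, Finset.mem_insert, Finset.mem_singleton] at hiS
  rcases hiS with rfl | rfl | rfl | rfl | rfl | rfl
  · have m1 := hu 1 (by decide) (by decide)
    have m2 := hu 2 (by decide) (by decide)
    have m3 := hu 3 (by decide) (by decide)
    have m7 := hu 7 (by decide) (by decide)
    have m8 := hu 8 (by decide) (by decide)
    simp only [eta6, Fin.sum_univ_six, Matrix.cons_val_zero, Matrix.cons_val_one,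
      Matrix.head_cons, Matrix.cons_val_two, Matrix.cons_val_three, Matrix.cons_val_four,
      Matrix.head_fin_const, Matrix.tail_cons, six5, nine5, nine6, nine7, nine8] at hival m1 m2 m3 m7 m8
    omega
  · have m0 := hu 0 (by decide) (by decide)
    have m2 := hu 2 (by decide) (by decide)
    have m3 := hu 3 (by decide) (by decide)
    have m7 := hu 7 (by decide) (by decide)
    have m8 := hu 8 (by decide) (by decide)
    simp only [eta6, Fin.sum_univ_six, Matrix.cons_val_zero, Matrix.cons_val_one,
      Matrix.head_cons, Matrix.cons_val_two, Matrix.cons_val_three, Matrix.cons_val_four,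
      Matrix.head_fin_const, Matrix.tail_cons, six5, nine5, nine6, nine7, nine8] at hival m0 m2 m3 m7 m8
    omega
  · have m0 := hu 0 (by decide) (by decide)
    have m1 := hu 1 (by decide) (by decide)
    have m3 := hu 3 (by decide) (by decide)
    have m7 := hu 7 (by decide) (by decide)
    have m8 := hu 8 (by decide) (by decide)
    simp only [eta6, Fin.sum_univ_six, Matrix.cons_val_zero, Matrix.cons_val_one,
      Matrix.head_cons, Matrix.cons_val_two, Matrix.cons_val_three, Matrix.cons_val_four,
      Matrix.head_fin_const, Matrix.tail_cons, six5, nine5, nine6, nine7, nine8] at hival m0 m1 m3 m7 m8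
    omega
  · have m0 := hu 0 (by decide) (by decide)
    have m1 := hu 1 (by decide) (by decide)
    have m2 := hu 2 (by decide) (by decide)
    have m7 := hu 7 (by decide) (by decide)
    have m8 := hu 8 (by decide) (by decide)
    simp only [eta6, Fin.sum_univ_six, Matrix.cons_val_zero, Matrix.cons_val_one,
      Matrix.head_cons, Matrix.cons_val_two, Matrix.cons_val_three, Matrix.cons_val_four,
      Matrix.head_fin_const, Matrix.tail_cons, six5, nine5, nine6, nine7, nine8] at hival m0 m1 m2 m7 m8
    omega
  · have m0 := hu 0 (by decide) (by decide)
    have m1 := hu 1 (by decide) (by decide)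
    have m2 := hu 2 (by decide) (by decide)
    have m3 := hu 3 (by decide) (by decide)
    have m8 := hu 8 (by decide) (by decide)
    simp only [eta6, Fin.sum_univ_six, Matrix.cons_val_zero, Matrix.cons_val_one,
      Matrix.head_cons, Matrix.cons_val_two, Matrix.cons_val_three, Matrix.cons_val_four,
      Matrix.head_fin_const, Matrix.tail_cons, six5, nine5, nine6, nine7, nine8] at hival m0 m1 m2 m3 m8
    omega
  · have m0 := hu 0 (by decide) (by decide)
    have m1 := hu 1 (by decide) (by decide)
    have m2 := hu 2 (by decide) (by decide)
    have m3 := hu 3 (by decide) (by decide)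
    have m7 := hu 7 (by decide) (by decide)
    simp only [eta6, Fin.sum_univ_six, Matrix.cons_val_zero, Matrix.cons_val_one,
      Matrix.head_cons, Matrix.cons_val_two, Matrix.cons_val_three, Matrix.cons_val_four,
      Matrix.head_fin_const, Matrix.tail_cons, six5, nine5, nine6, nine7, nine8] at hival m0 m1 m2 m3 m7
    omega

end ToricStmt
end
end

section
/- Let Δ = Δ(κ) ⊂ ℝⁿ be a smooth polytope, let H ∈ ℤⁿ and κ_{N+1}, κ_{N+2} ∈ ℝ, and suppose the bundle polytope Δ' ⊂ ℝ^{n+1} over the 1-simplex determined by (H, κ_{N+1}, κ_{N+2}) is combinatorially a product. If Δ' is monotone (i.e. Δ' is integral and there exists u₀ ∈ ℤ^{n+1} such that the support number of each of the N+2 facets of Δ' relative to u₀ equals 1), then either H = 0 or H = η_j for some j ∈ {1,…,N}. -/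
/-!
Let `v` be a vertex of `Δ` maximising `⟨H, ·⟩`. By smoothness the conormals active at `v`
form a `ℤ`-basis, so `H = ∑ cᵢ ηᵢ` with `cᵢ ∈ ℤ`, and maximality of `v` forces `cᵢ ≥ 0`.
If `u` is the base part of the monotone centre `u₀` of `Δ'`, then `⟨ηᵢ, v - u⟩ = 1` for every
active `i`, so `∑ cᵢ = ⟨H, v - u⟩`, while `κ_{N+1} + κ_{N+2} = 2 + ⟨H, u⟩`. Over `v` the fibre
of `Δ'` is `-κ_{N+1} ≤ t ≤ κ_{N+2} - ⟨H, v⟩`; it is nonempty because `Δ'` is combinatorially a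
product, and not a single point because the top and bottom facets are disjoint. Hence
`⟨H, v⟩ < κ_{N+1} + κ_{N+2}`, that is `∑ cᵢ < 2`, and nonnegative integers with sum at most `1`
give `H = 0` or `H = ηⱼ`.
-/

open MeasureTheory Finset
open scoped Pointwise Classical

noncomputable section

namespace ToricStmt

/-- All vertices of `Δ(κ)` are lattice points. -/
def IsIntegral {n N : ℕ} (η : Fin N → Fin n → ℤ) (κ : Fin N → ℝ) : Prop :=
  ∀ x, IsVertex η κ x → ∀ t, ∃ m : ℤ, x t = (m : ℝ)

/-- `Δ(κ)` is monotone: integral, and some lattice point has affine distance `1` to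
every facet. -/
def IsMonotonePoly {n N : ℕ} (η : Fin N → Fin n → ℤ) (κ : Fin N → ℝ) : Prop :=
  IsIntegral η κ ∧ ∃ u₀ : Fin n → ℤ, ∀ i, κ i - dot (iv (η i)) (iv u₀) = 1

/-- Conormals of the bundle polytope over the `1`-simplex determined by `H`:
the prolonged fiber conormals `(η i, 0)`, then `(0, -1)`, then `(H, 1)`. -/
def bunEta1 {n N : ℕ} (η : Fin N → Fin n → ℤ) (H : Fin n → ℤ) :
    Fin (N + 2) → Fin (n + 1) → ℤ := fun j t =>
  if hj : (j : ℕ) < N then (if ht : (t : ℕ) < n then η ⟨j, hj⟩ ⟨t, ht⟩ else 0)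
  else if (j : ℕ) = N then (if (t : ℕ) = n then -1 else 0)
  else (if ht : (t : ℕ) < n then H ⟨t, ht⟩ else 1)

/-- Support constants of the bundle polytope over the `1`-simplex. -/
def bunKappa1 {N : ℕ} (κ : Fin N → ℝ) (κ1 κ2 : ℝ) : Fin (N + 2) → ℝ := fun j =>
  if hj : (j : ℕ) < N then κ ⟨j, hj⟩ else if (j : ℕ) = N then κ1 else κ2

/-- The index of the bottom facet `F'_{N+1}`. -/
def idxB {N : ℕ} : Fin (N + 2) := ⟨N, by omega⟩

/-- The index of the top facet `F'_{N+2}`. -/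
def idxT {N : ℕ} : Fin (N + 2) := ⟨N + 1, by omega⟩

/-- The bundle polytope over the `1`-simplex is combinatorially a product: it is a
compact smooth polytope, top and bottom facets are disjoint, and for every
`I ⊆ {1,…,N}` the faces `F'_I ∩ F'_{N+1}`, `F_I` and `F'_I ∩ F'_{N+2}` are
simultaneously nonempty or empty. -/
def CombProd1 {n N : ℕ} (η : Fin N → Fin n → ℤ) (κ : Fin N → ℝ)
    (H : Fin n → ℤ) (κ1 κ2 : ℝ) : Prop :=
  IsSmoothPolytope (bunEta1 η H) (bunKappa1 κ κ1 κ2) ∧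
  Face (bunEta1 η H) (bunKappa1 κ κ1 κ2) {idxB, idxT} = ∅ ∧
  ∀ I : Finset (Fin N),
    ((Face (bunEta1 η H) (bunKappa1 κ κ1 κ2)
        (insert idxB (I.image (Fin.castAdd 2)))).Nonempty ↔ (Face η κ I).Nonempty) ∧
    ((Face (bunEta1 η H) (bunKappa1 κ κ1 κ2)
        (insert idxT (I.image (Fin.castAdd 2)))).Nonempty ↔ (Face η κ I).Nonempty)

end ToricStmt

theorem IsCompact.exists_mem_extremePoints_isMaxOn {E : Type*} [AddCommGroup E] [Module ℝ E]
    [TopologicalSpace E] [T2Space E] [IsTopologicalAddGroup E] [ContinuousSMul ℝ E]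
    [LocallyConvexSpace ℝ E] {s : Set E} (hs : IsCompact s) (hne : s.Nonempty)
    (l : StrongDual ℝ E) : ∃ x ∈ s.extremePoints ℝ, IsMaxOn l s x := by
  obtain ⟨z, hzs, hz⟩ := hs.exists_isMaxOn hne l.continuous.continuousOn
  have hexp : IsExposed ℝ s (l.toExposed s) := ContinuousLinearMap.toExposed.isExposed
  obtain ⟨x, hx⟩ := (hexp.isCompact hs).extremePoints_nonempty ⟨z, hzs, hz⟩
  exact ⟨x, hexp.isExtreme.extremePoints_subset_extremePoints hx, hx.1.2⟩

theorem Module.Basis.repr_nonneg_of_isMaxOn {V ι : Type*} [NormedAddCommGroup V]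
    [InnerProductSpace ℝ V] [FiniteDimensional ℝ V] (b : Module.Basis ι ℝ V) {A : Set V}
    {x h : V} (hmax : IsMaxOn (inner ℝ h) A x)
    (hcone : ∀ w, (∀ i, inner ℝ (b i) w ≤ 0) → ∃ ε : ℝ, 0 < ε ∧ x + ε • w ∈ A) (k : ι) :
    0 ≤ b.repr h k := by
  set w : V := -(InnerProductSpace.toDual ℝ V).symm (LinearMap.toContinuousLinearMap (b.coord k))
  have hw : ∀ y, inner ℝ y w = -b.repr y k := fun y => by
    simp [w, real_inner_comm _ y, InnerProductSpace.toDual_symm_apply]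
  obtain ⟨ε, hε, hmem⟩ := hcone w fun i => by
    rw [hw, Module.Basis.repr_self, Finsupp.single_apply, neg_nonpos]
    split_ifs <;> norm_num
  have hle : inner ℝ h (x + ε • w) ≤ inner ℝ h x := hmax hmem
  rw [inner_add_right, inner_smul_right, hw] at hle
  nlinarith

theorem Finset.sum_zsmul_eq_zero_or_exists_eq {ι M : Type*} [AddCommGroup M] {s : Finset ι}
    {c : ι → ℤ} (f : ι → M) (hc : ∀ i ∈ s, 0 ≤ c i) (hsum : ∑ i ∈ s, c i ≤ 1) :
    ∑ i ∈ s, c i • f i = 0 ∨ ∃ i ∈ s, ∑ j ∈ s, c j • f j = f i := by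
  by_cases hzero : ∀ i ∈ s, c i = 0
  · exact Or.inl (Finset.sum_eq_zero fun i hi => by rw [hzero i hi, zero_smul])
  push Not at hzero
  obtain ⟨i, hi, hci⟩ := hzero
  have hothers : ∀ j ∈ s, j ≠ i → c j = 0 := fun j hj hji => by
    have := Finset.add_le_sum hc hj hi hji
    have := hc j hj
    have := hc i hi
    omega
  have hci1 : c i = 1 := by
    have := Finset.single_le_sum hc hi
    have := hc i hi
    omega
  refine Or.inr ⟨i, hi, ?_⟩
  rw [Finset.sum_eq_single_of_mem i hi fun j hj hji => by rw [hothers j hj hji, zero_smul],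
    hci1, one_smul]

namespace ToricStmt

section Lattice

variable {n : ℕ}

lemma dot_eq_inner (u v : E n) : dot u v = inner ℝ u v := by
  simp [dot, PiLp.inner_apply, mul_comm]

@[simp] lemma iv_apply (g : Fin n → ℤ) (t : Fin n) : iv g t = g t := rfl

def ivHom (n : ℕ) : (Fin n → ℤ) →+ E n where
  toFun := iv
  map_zero' := by ext; simp
  map_add' _ _ := by ext; simp

lemma iv_sum_zsmul (s : Finset (Fin n → ℤ)) (c : (Fin n → ℤ) → ℤ) :
    iv (∑ g ∈ s, c g • g) = ∑ g ∈ s, (c g : ℝ) • iv g := by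
  change ivHom n _ = _
  rw [map_sum]
  refine Finset.sum_congr rfl fun g _ => ?_
  rw [map_zsmul, Int.cast_smul_eq_zsmul]
  rfl

lemma dot_iv_sum_zsmul (s : Finset (Fin n → ℤ)) (c : (Fin n → ℤ) → ℤ) (x : E n) :
    dot (iv (∑ g ∈ s, c g • g)) x = ∑ g ∈ s, c g * dot (iv g) x := by
  simp only [dot_eq_inner, iv_sum_zsmul, sum_inner, real_inner_smul_left]

lemma span_iv_eq_top {S : Set (Fin n → ℤ)} (hS : Submodule.span ℤ S = ⊤) :
    Submodule.span ℝ (iv '' S) = ⊤ := by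
  set T := Submodule.span ℝ (iv '' S)
  have hmem : ∀ g, iv g ∈ T := by
    have : Submodule.span ℤ S ≤ (T.restrictScalars ℤ).comap (ivHom n).toIntLinearMap :=
      Submodule.span_le.2 fun g hg => Submodule.subset_span ⟨g, hg, rfl⟩
    exact fun g => this (hS ▸ Submodule.mem_top)
  rw [eq_top_iff, ← (EuclideanSpace.basisFun (Fin n) ℝ).toBasis.span_eq, Submodule.span_le]
  rintro _ ⟨t, rfl⟩
  have hunit : (EuclideanSpace.basisFun (Fin n) ℝ).toBasis t = iv (Pi.single t 1) := by
    ext r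
    simp [Pi.single_apply]
  exact hunit ▸ hmem _

lemma exists_basis_iv {s : Finset (Fin n → ℤ)} (hcard : s.card ≤ n)
    (hs : Submodule.span ℤ (s : Set (Fin n → ℤ)) = ⊤) :
    ∃ b : Module.Basis s ℝ (E n), ∀ g, b g = iv ↑g := by
  have hspan : ⊤ ≤ Submodule.span ℝ (Set.range fun g : s => iv (g : Fin n → ℤ)) := by
    have hrange : Set.range (fun g : s => iv (g : Fin n → ℤ)) = iv '' s := by ext; simp
    rw [hrange, span_iv_eq_top hs]
  have hcard' : Fintype.card s = Module.finrank ℝ (E n) := by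
    refine le_antisymm (by simpa using hcard) ?_
    have := finrank_range_le_card (R := ℝ) fun g : s => iv (g : Fin n → ℤ)
    rwa [Set.finrank, top_unique hspan, finrank_top] at this
  exact ⟨basisOfTopLeSpanOfCardEqFinrank _ hspan hcard', fun g => by simp⟩

end Lattice

section Polytope

variable {n N : ℕ} {η : Fin N → Fin n → ℤ} {κ : Fin N → ℝ}

lemma eventually_add_smul_mem_delta {z w : E n} (hz : z ∈ Delta η κ)
    (hw : ∀ i ∈ activeIdx η κ z, dot (iv (η i)) w ≤ 0) :
    ∀ᶠ ε in nhdsWithin (0 : ℝ) (Set.Ioi 0), z + ε • w ∈ Delta η κ := by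
  refine Filter.eventually_all.2 fun i => ?_
  simp only [dot_eq_inner, inner_add_right, inner_smul_right]
  by_cases hi : i ∈ activeIdx η κ z
  · have hzi : dot (iv (η i)) z = κ i := (Finset.mem_filter.1 hi).2
    filter_upwards [self_mem_nhdsWithin] with ε hε
    have := hw i hi
    rw [dot_eq_inner] at hzi this
    nlinarith [Set.mem_Ioi.1 hε]
  · have hzi : dot (iv (η i)) z < κ i :=
      (hz i).lt_of_ne fun h => hi (Finset.mem_filter.2 ⟨Finset.mem_univ _, h⟩)
    rw [dot_eq_inner] at hzi
    have hnear : ∀ᶠ ε in nhds (0 : ℝ), inner ℝ (iv (η i)) z + ε * inner ℝ (iv (η i)) w < κ i :=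
      ContinuousAt.eventually_lt (by fun_prop) continuousAt_const (by simpa using hzi)
    exact nhdsWithin_le_nhds (hnear.mono fun _ h => h.le)

lemma face_activeIdx_eq_singleton {v : E n} (hv : v ∈ (Delta η κ).extremePoints ℝ) :
    Face η κ (activeIdx η κ v) = {v} := by
  refine Set.eq_singleton_iff_unique_mem.2 ⟨⟨hv.1, fun i hi => (Finset.mem_filter.1 hi).2⟩, ?_⟩
  rintro y ⟨-, hy⟩
  have hflat : ∀ i ∈ activeIdx η κ v, dot (iv (η i)) (y - v) = 0 := fun i hi => by
    rw [dot_eq_inner, inner_sub_right, ← dot_eq_inner, ← dot_eq_inner, hy i hi,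
      (Finset.mem_filter.1 hi).2, sub_self]
  obtain ⟨ε, ⟨hplus, hminus⟩, hε⟩ :=
    (((eventually_add_smul_mem_delta hv.1 fun i hi => (hflat i hi).le).and
      (eventually_add_smul_mem_delta (w := -(y - v)) hv.1 fun i hi => by
        rw [dot_eq_inner, inner_neg_right, ← dot_eq_inner, hflat i hi, neg_zero])).and
      self_mem_nhdsWithin).exists
  have hmid : v ∈ openSegment ℝ (v + ε • (y - v)) (v + ε • -(y - v)) :=
    ⟨1 / 2, 1 / 2, by norm_num, by norm_num, by norm_num, by module⟩
  have := hv.2 hplus hminus hmid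
  have hε0 : ε ≠ 0 := (Set.mem_Ioi.1 hε).ne'
  simpa [hε0, sub_eq_zero] using this

lemma exists_nonneg_coeffs_of_isMaxOn {v : E n} {H : Fin n → ℤ} (hv : v ∈ Delta η κ)
    (hmax : IsMaxOn (dot (iv H)) (Delta η κ) v) (hcard : (activeIdx η κ v).card = n)
    (hspan : Submodule.span ℤ (((activeIdx η κ v).image η : Finset _) : Set (Fin n → ℤ)) = ⊤) :
    ∃ c : (Fin n → ℤ) → ℤ, (∀ g ∈ (activeIdx η κ v).image η, 0 ≤ c g) ∧
      ∑ g ∈ (activeIdx η κ v).image η, c g • g = H := by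
  set s := (activeIdx η κ v).image η
  obtain ⟨b, hb⟩ := exists_basis_iv (Finset.card_image_le.trans hcard.le) hspan
  obtain ⟨c, -, hc⟩ := Submodule.mem_span_finset.1 (hspan ▸ Submodule.mem_top : H ∈ _)
  refine ⟨c, fun g hg => ?_, hc⟩
  have hH : iv H = ∑ g : s, (c g : ℝ) • b g := by
    simp only [hb, ← hc, iv_sum_zsmul]
    exact (Finset.sum_coe_sort s fun g => (c g : ℝ) • iv g).symm
  have hcone : ∀ w, (∀ g, inner ℝ (b g) w ≤ 0) → ∃ ε : ℝ, 0 < ε ∧ v + ε • w ∈ Delta η κ :=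
    fun w hw => ((eventually_add_smul_mem_delta hv fun i hi => by
        simpa [hb, dot_eq_inner] using hw ⟨η i, Finset.mem_image_of_mem η hi⟩).and
      self_mem_nhdsWithin).exists.imp fun _ h => ⟨h.2, h.1⟩
  have hmax' : IsMaxOn (inner ℝ (iv H)) (Delta η κ) v := by
    simpa only [funext (dot_eq_inner (iv H))] using hmax
  have := b.repr_nonneg_of_isMaxOn hmax' hcone ⟨g, hg⟩
  rw [hH, b.repr_sum_self] at this
  exact_mod_cast this

end Polytope

section Bundle

variable {n N : ℕ} {η : Fin N → Fin n → ℤ} {κ : Fin N → ℝ} {H : Fin n → ℤ} {κ1 κ2 : ℝ}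

def base (p : E (n + 1)) : E n := WithLp.toLp 2 (Fin.init p.ofLp)

@[simp] lemma base_iv (g : Fin (n + 1) → ℤ) : base (iv g) = iv (Fin.init g) := rfl

lemma dot_iv_snoc (g : Fin n → ℤ) (a : ℤ) (p : E (n + 1)) :
    dot (iv (Fin.snoc g a : Fin (n + 1) → ℤ)) p = dot (iv g) (base p) + a * p (Fin.last n) := by
  simp [dot, Fin.sum_univ_castSucc, base, Fin.init]

@[simp] lemma dot_bunEta1_castAdd (i : Fin N) (p : E (n + 1)) :
    dot (iv (bunEta1 η H (Fin.castAdd 2 i))) p = dot (iv (η i)) (base p) := by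
  have : bunEta1 η H (Fin.castAdd 2 i) = Fin.snoc (η i) 0 := by
    funext t
    refine Fin.lastCases ?_ (fun r => ?_) t <;> simp [bunEta1]
  simp [this, dot_iv_snoc]

@[simp] lemma dot_bunEta1_idxB (p : E (n + 1)) :
    dot (iv (bunEta1 η H idxB)) p = -p (Fin.last n) := by
  have : bunEta1 η H idxB = Fin.snoc 0 (-1) := by
    funext t
    refine Fin.lastCases ?_ (fun r => ?_) t
    · simp [bunEta1, idxB]
    · simp [bunEta1, idxB, r.is_lt.ne]
  rw [this, dot_iv_snoc]
  simp [dot]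

@[simp] lemma dot_bunEta1_idxT (p : E (n + 1)) :
    dot (iv (bunEta1 η H idxT)) p = dot (iv H) (base p) + p (Fin.last n) := by
  have : bunEta1 η H idxT = Fin.snoc H 1 := by
    funext t
    refine Fin.lastCases ?_ (fun r => ?_) t <;> simp [bunEta1, idxT]
  simp [this, dot_iv_snoc]

@[simp] lemma bunKappa1_castAdd (i : Fin N) : bunKappa1 κ κ1 κ2 (Fin.castAdd 2 i) = κ i := by
  simp [bunKappa1]

@[simp] lemma bunKappa1_idxB : bunKappa1 κ κ1 κ2 idxB = κ1 := by
  simp [bunKappa1, idxB]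

@[simp] lemma bunKappa1_idxT : bunKappa1 κ κ1 κ2 idxT = κ2 := by
  simp [bunKappa1, idxT]

lemma base_mem_delta {p : E (n + 1)} (hp : p ∈ Delta (bunEta1 η H) (bunKappa1 κ κ1 κ2)) :
    base p ∈ Delta η κ := fun i => by
  simpa using hp (Fin.castAdd 2 i)

lemma dot_lt_of_face_eq_singleton (hcomb : CombProd1 η κ H κ1 κ2) {I : Finset (Fin N)}
    {v : E n} (hface : Face η κ I = {v}) : dot (iv H) v < κ1 + κ2 := by
  obtain ⟨p, hpΔ, hpI⟩ := (hcomb.2.2 I).2.2 (hface ▸ Set.singleton_nonempty v)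
  have hbase : base p = v := by
    have : base p ∈ Face η κ I := ⟨base_mem_delta hpΔ, fun i hi => by
      simpa using hpI (Fin.castAdd 2 i) (Finset.mem_insert_of_mem (Finset.mem_image_of_mem _ hi))⟩
    rwa [hface] at this
  have htop : dot (iv H) v + p (Fin.last n) = κ2 := by
    simpa [hbase] using hpI idxT (Finset.mem_insert_self _ _)
  have hbot : -p (Fin.last n) ≤ κ1 := by
    simpa using hpΔ idxB
  refine lt_of_le_of_ne (by linarith) fun heq => hcomb.2.1.subset (show p ∈ _ from ⟨hpΔ, ?_⟩)
  simp only [Finset.mem_insert, Finset.mem_singleton, forall_eq_or_imp, forall_eq]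
  exact ⟨by simp; linarith, hpI idxT (Finset.mem_insert_self _ _)⟩

lemma IsMonotonePoly.exists_bundle_center
    (hmono : IsMonotonePoly (bunEta1 η H) (bunKappa1 κ κ1 κ2)) :
    ∃ u : Fin n → ℤ, (∀ i, dot (iv (η i)) (iv u) = κ i - 1) ∧
      κ1 + κ2 = 2 + dot (iv H) (iv u) := by
  obtain ⟨-, u₀, hu₀⟩ := hmono
  refine ⟨Fin.init u₀, fun i => ?_, ?_⟩
  · have := hu₀ (Fin.castAdd 2 i)
    simp only [dot_bunEta1_castAdd, bunKappa1_castAdd, base_iv] at this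
    linarith
  · have hB := hu₀ idxB
    have hT := hu₀ idxT
    simp only [dot_bunEta1_idxB, dot_bunEta1_idxT, bunKappa1_idxB, bunKappa1_idxT, base_iv] at hB hT
    linarith

end Bundle

theorem stmt10_general {n N : ℕ}
    (η : Fin N → Fin n → ℤ)
    (κ : Fin N → ℝ) (hsm : IsSmoothPolytope η κ)
    (H : Fin n → ℤ) (κ1 κ2 : ℝ)
    (hcomb : CombProd1 η κ H κ1 κ2)
    (hmono : IsMonotonePoly (bunEta1 η H) (bunKappa1 κ κ1 κ2)) :
    H = 0 ∨ ∃ j : Fin N, H = η j := by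
  obtain ⟨u, hu, hκ⟩ := hmono.exists_bundle_center
  obtain ⟨v, hv, hmax⟩ := hsm.1.exists_mem_extremePoints_isMaxOn
    (hsm.2.1.mono interior_subset) (innerSL ℝ (iv H))
  have hface := face_activeIdx_eq_singleton hv
  obtain ⟨hcard, hspan⟩ := hsm.2.2.2 v ⟨_, hface⟩
  obtain ⟨c, hc, hH⟩ := exists_nonneg_coeffs_of_isMaxOn hv.1
    (H := H) (fun y hy => by simpa [dot_eq_inner] using hmax hy) hcard hspan
  set s := (activeIdx η κ v).image η
  have hheight : ∀ g ∈ s, dot (iv g) v - dot (iv g) (iv u) = 1 := by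
    rintro _ hg
    obtain ⟨i, hi, rfl⟩ := Finset.mem_image.1 hg
    rw [(Finset.mem_filter.1 hi).2, hu]
    ring
  have hgap : dot (iv H) v - dot (iv H) (iv u) = ∑ g ∈ s, (c g : ℝ) := by
    rw [← hH, dot_iv_sum_zsmul, dot_iv_sum_zsmul, ← Finset.sum_sub_distrib]
    exact Finset.sum_congr rfl fun g hg => by rw [← mul_sub, hheight g hg, mul_one]
  have hsum : ∑ g ∈ s, c g < 2 := by
    have := dot_lt_of_face_eq_singleton hcomb hface
    exact_mod_cast (show (∑ g ∈ s, (c g : ℝ)) < 2 by linarith)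
  rcases Finset.sum_zsmul_eq_zero_or_exists_eq id hc (by omega) with h0 | ⟨g, hg, hgH⟩
  · exact Or.inl (hH ▸ h0)
  · obtain ⟨j, -, rfl⟩ := Finset.mem_image.1 hg
    exact Or.inr ⟨j, hH ▸ hgH⟩

/-- If the bundle polytope over the `1`-simplex determined by
`(H, κ_{N+1}, κ_{N+2})` is combinatorially a product and is monotone, then either
`H = 0` or `H = η_j` for some facet conormal `η_j` of the fiber. -/
theorem stmt10 {n N : ℕ} (hn : 1 ≤ n) (hN : n + 1 ≤ N)
    (η : Fin N → Fin n → ℤ) (hprim : ∀ i, IsPrimitive (η i))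
    (κ : Fin N → ℝ) (hsm : IsSmoothPolytope η κ)
    (H : Fin n → ℤ) (κ1 κ2 : ℝ)
    (hcomb : CombProd1 η κ H κ1 κ2)
    (hmono : IsMonotonePoly (bunEta1 η H) (bunKappa1 κ κ1 κ2)) :
    H = 0 ∨ ∃ j : Fin N, H = η j :=
  stmt10_general η κ hsm H κ1 κ2 hcomb hmono

end ToricStmt
end
end

section
/- Let Δ ⊂ ℝⁿ be a compact convex set that contains the origin and all the standard basis vectors e_1, …, e_n. Then every point v = (a_1, …, a_n) ∈ Δ satisfies |a_i| ≤ n! · vol(Δ) for each i = 1, …, n, where vol denotes Lebesgue measure. -/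
open MeasureTheory Set Pointwise

/-- The closed standard corner simplex. -/
def cornerSimplex (n : ℕ) : Set (Fin n → ℝ) :=
  {x | (∀ j, 0 ≤ x j) ∧ ∑ j, x j ≤ 1}

lemma isClosed_cornerSimplex (n : ℕ) : IsClosed (cornerSimplex n) := by
  have h1 : IsClosed {x : Fin n → ℝ | ∀ j, 0 ≤ x j} := by
    rw [Set.setOf_forall]
    exact isClosed_iInter fun j => isClosed_le continuous_const (continuous_apply j)
  have h2 : IsClosed {x : Fin n → ℝ | ∑ j, x j ≤ 1} :=
    isClosed_le (continuous_finset_sum _ fun j _ => continuous_apply j) continuous_const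
  exact h1.inter h2

lemma smul_cornerSimplex {n : ℕ} {c : ℝ} (hc : 0 ≤ c) :
    c • cornerSimplex n = {x | (∀ j, 0 ≤ x j) ∧ ∑ j, x j ≤ c} := by
  rcases hc.eq_or_lt with rfl | hc
  · have hne : (cornerSimplex n).Nonempty := ⟨0, by simp [cornerSimplex]⟩
    rw [zero_smul_set hne]
    ext x
    simp only [mem_setOf_eq, mem_singleton_iff]
    constructor
    · rintro rfl; simp
    · rintro ⟨h1, h2⟩
      have hsum : ∑ j, x j = 0 :=
        le_antisymm h2 (Finset.sum_nonneg fun j _ => h1 j)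
      funext j
      have := (Finset.sum_eq_zero_iff_of_nonneg (fun j _ => h1 j)).1 hsum j (Finset.mem_univ j)
      simpa using this
  · ext x
    rw [Set.mem_smul_set_iff_inv_smul_mem₀ hc.ne']
    simp only [cornerSimplex, mem_setOf_eq, Pi.smul_apply, smul_eq_mul]
    have hcinv : 0 < c⁻¹ := inv_pos.2 hc
    constructor
    · rintro ⟨h1, h2⟩
      refine ⟨fun j => nonneg_of_mul_nonneg_right (h1 j) hcinv, ?_⟩
      rw [← Finset.mul_sum] at h2
      calc ∑ j, x j = c * (c⁻¹ * ∑ j, x j) := by field_simp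
        _ ≤ c * 1 := by nlinarith
        _ = c := mul_one c
    · rintro ⟨h1, h2⟩
      refine ⟨fun j => mul_nonneg hcinv.le (h1 j), ?_⟩
      rw [← Finset.mul_sum]
      calc c⁻¹ * ∑ j, x j ≤ c⁻¹ * c := by nlinarith
        _ = 1 := inv_mul_cancel₀ hc.ne'

lemma volume_cornerSimplex (n : ℕ) :
    volume (cornerSimplex n) = ENNReal.ofReal (1 / n.factorial) := by
  induction n with
  | zero =>
      have : cornerSimplex 0 = univ := by
        ext x; simp [cornerSimplex]
      rw [this]
      simp [volume_pi, Measure.pi_univ]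
  | succ n ih =>
      set e := MeasurableEquiv.piFinSuccAbove (fun _ : Fin (n + 1) => ℝ) 0 with he
      have hmeas : MeasurableSet (cornerSimplex (n + 1)) :=
        (isClosed_cornerSimplex (n + 1)).measurableSet
      have hpres : MeasurePreserving e.symm :=
        (volume_preserving_piFinSuccAbove (fun _ : Fin (n + 1) => ℝ) 0).symm e
      have key : volume (e.symm ⁻¹' cornerSimplex (n + 1)) = volume (cornerSimplex (n + 1)) :=
        hpres.measure_preimage hmeas.nullMeasurableSet
      set T : Set (ℝ × (Fin n → ℝ)) :=
        {p | 0 ≤ p.1 ∧ (∀ j, 0 ≤ p.2 j) ∧ p.1 + ∑ j, p.2 j ≤ 1} with hT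
      have hTeq : e.symm ⁻¹' cornerSimplex (n + 1) = T := by
        ext p
        have hes : e.symm p = Fin.cons p.1 p.2 := by
          simp [he, MeasurableEquiv.piFinSuccAbove, Fin.insertNthEquiv, Fin.insertNth_zero]
        simp only [Set.mem_preimage, hes, cornerSimplex, mem_setOf_eq, hT,
          Fin.sum_cons, Fin.forall_fin_succ, Fin.cons_zero, Fin.cons_succ]
        tauto
      have hTmeas : MeasurableSet T := by
        have h1 : IsClosed {p : ℝ × (Fin n → ℝ) | 0 ≤ p.1} :=
          isClosed_le continuous_const continuous_fst
        have h2 : IsClosed {p : ℝ × (Fin n → ℝ) | ∀ j, 0 ≤ p.2 j} := by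
          rw [Set.setOf_forall]
          exact isClosed_iInter fun j =>
            isClosed_le continuous_const ((continuous_apply j).comp continuous_snd)
        have h3 : IsClosed {p : ℝ × (Fin n → ℝ) | p.1 + ∑ j, p.2 j ≤ 1} :=
          isClosed_le (continuous_fst.add
            (continuous_finset_sum _ fun j _ => (continuous_apply j).comp continuous_snd))
            continuous_const
        have hT' : T = {p : ℝ × (Fin n → ℝ) | 0 ≤ p.1} ∩
            ({p | ∀ j, 0 ≤ p.2 j} ∩ {p | p.1 + ∑ j, p.2 j ≤ 1}) := by
          ext p; simp only [hT, mem_setOf_eq, mem_inter_iff]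
        rw [hT']
        exact (h1.inter (h2.inter h3)).measurableSet
      have hfr : Module.finrank ℝ (Fin n → ℝ) = n := by
        simp [Module.finrank_pi]
      have hslice : ∀ t : ℝ, volume (Prod.mk t ⁻¹' T) =
          (Icc (0:ℝ) 1).indicator
            (fun t => ENNReal.ofReal ((1 - t) ^ n) * volume (cornerSimplex n)) t := by
        intro t
        by_cases ht : t ∈ Icc (0:ℝ) 1
        · obtain ⟨ht0, ht1⟩ := ht
          have h1t : (0:ℝ) ≤ 1 - t := by linarith
          have hpre : Prod.mk t ⁻¹' T = (1 - t) • cornerSimplex n := by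
            rw [smul_cornerSimplex h1t]
            ext y
            simp only [mem_preimage, hT, mem_setOf_eq, ht0, true_and]
            constructor
            · rintro ⟨h1, h2⟩; exact ⟨h1, by linarith⟩
            · rintro ⟨h1, h2⟩; exact ⟨h1, by linarith⟩
          rw [hpre, Measure.addHaar_smul, indicator_of_mem (mem_Icc.2 ⟨ht0, ht1⟩), hfr]
          congr 2
          rw [abs_of_nonneg (by positivity)]
        · have hpre : Prod.mk t ⁻¹' T = ∅ := by
            ext y
            simp only [mem_preimage, hT, mem_setOf_eq, mem_empty_iff_false, iff_false]
            rintro ⟨h0', h1', h2'⟩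
            rw [mem_Icc, not_and_or, not_le, not_le] at ht
            have hs : 0 ≤ ∑ j, y j := Finset.sum_nonneg fun j _ => h1' j
            rcases ht with ht | ht <;> linarith
          rw [hpre, indicator_of_notMem ht]
          simp
      have hcont : Continuous fun t : ℝ => (1 - t) ^ n := by continuity
      have hint : IntegrableOn (fun t : ℝ => (1 - t) ^ n) (Icc (0:ℝ) 1) volume :=
        hcont.integrableOn_Icc
      have hnn : 0 ≤ᵐ[volume.restrict (Icc (0:ℝ) 1)] fun t : ℝ => (1 - t) ^ n := by
        refine (ae_restrict_iff' measurableSet_Icc).2 (ae_of_all _ fun t ht => ?_)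
        have : (0:ℝ) ≤ 1 - t := by linarith [ht.2]
        positivity
      have hIcalc : ∫ t in Icc (0:ℝ) 1, (1 - t) ^ n = 1 / (n + 1) := by
        rw [MeasureTheory.integral_Icc_eq_integral_Ioc,
          ← intervalIntegral.integral_of_le (by norm_num : (0:ℝ) ≤ 1)]
        have := intervalIntegral.integral_comp_sub_left (a := (0:ℝ)) (b := 1)
          (fun x : ℝ => x ^ n) 1
        simp only [sub_zero, sub_self] at this
        rw [this, integral_pow]
        norm_num
      calc volume (cornerSimplex (n + 1)) = volume T := by rw [← key, hTeq]
        _ = (volume.prod volume) T := by rw [Measure.volume_eq_prod]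
        _ = ∫⁻ t, volume (Prod.mk t ⁻¹' T) := Measure.prod_apply hTmeas
        _ = ∫⁻ t, (Icc (0:ℝ) 1).indicator
              (fun t => ENNReal.ofReal ((1 - t) ^ n) * volume (cornerSimplex n)) t :=
            lintegral_congr hslice
        _ = ∫⁻ t in Icc (0:ℝ) 1,
              ENNReal.ofReal ((1 - t) ^ n) * volume (cornerSimplex n) :=
            lintegral_indicator measurableSet_Icc _
        _ = (∫⁻ t in Icc (0:ℝ) 1, ENNReal.ofReal ((1 - t) ^ n)) * volume (cornerSimplex n) :=
            lintegral_mul_const' _ _ (by rw [ih]; exact ENNReal.ofReal_ne_top)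
        _ = ENNReal.ofReal (∫ t in Icc (0:ℝ) 1, (1 - t) ^ n) * volume (cornerSimplex n) := by
            rw [ofReal_integral_eq_lintegral_ofReal hint hnn]
        _ = ENNReal.ofReal (1 / (n + 1)) * ENNReal.ofReal (1 / n.factorial) := by
            rw [hIcalc, ih]
        _ = ENNReal.ofReal (1 / (n + 1).factorial) := by
            rw [← ENNReal.ofReal_mul (by positivity)]
            congr 1
            rw [Nat.factorial_succ]
            push_cast
            rw [div_mul_div_comm, one_mul]

/-- Borisov's bound. If a compact convex set `Δ ⊆ ℝⁿ` contains the
origin and all standard basis vectors, then every `v = (a_1, …, a_n) ∈ Δ` satisfies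
`|a_i| ≤ n! · vol(Δ)` for each `i`. -/
theorem stmt14 (n : ℕ) (K : Set (Fin n → ℝ)) (hK : IsCompact K) (hconv : Convex ℝ K)
    (h0 : (0 : Fin n → ℝ) ∈ K) (hbasis : ∀ i, Pi.single i (1 : ℝ) ∈ K) :
    ∀ v ∈ K, ∀ i, |v i| ≤ (Nat.factorial n : ℝ) * (volume K).toReal := by
  intro v hv i
  -- the linear map sending `e_i` to `v` and fixing the other basis vectors
  set A : Matrix (Fin n) (Fin n) ℝ := (1 : Matrix (Fin n) (Fin n) ℝ).updateCol i v with hA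
  set f : (Fin n → ℝ) →ₗ[ℝ] (Fin n → ℝ) := Matrix.toLin' A with hf
  have hdet : LinearMap.det f = v i := by
    rw [hf, LinearMap.det_toLin']
    have : A.det = Matrix.cramer (1 : Matrix (Fin n) (Fin n) ℝ) v i := by
      rw [Matrix.cramer_apply, hA]
    rw [this, Matrix.cramer_one]
    rfl
  -- `f` maps the corner simplex into `K`
  have himg : f '' cornerSimplex n ⊆ K := by
    rintro _ ⟨x, ⟨hx1, hx2⟩, rfl⟩
    -- express f x as a convex combination
    set w : Fin n → (Fin n → ℝ) := fun j => if j = i then v else Pi.single j 1 with hw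
    have hfx : f x = ∑ j, x j • w j := by
      funext k
      rw [hf]
      simp only [Matrix.toLin'_apply, Matrix.mulVec, dotProduct]
      rw [Finset.sum_apply]
      refine Finset.sum_congr rfl fun j _ => ?_
      have hAkj : A k j = w j k := by
        by_cases hj : j = i
        · subst hj
          simp [hA, hw, Matrix.updateCol_apply]
        · simp [hA, hw, hj, Matrix.updateCol_apply, Matrix.one_apply, Pi.single_apply]
      rw [hAkj, Pi.smul_apply, smul_eq_mul, mul_comm]
    rw [hfx]
    -- convex combination over `Option (Fin n)`
    have := hconv.sum_mem (t := (Finset.univ : Finset (Option (Fin n))))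
      (w := fun o => o.elim (1 - ∑ j, x j) x)
      (z := fun o => o.elim 0 w)
      (by
        intro o _
        cases o with
        | none => simpa using by linarith
        | some j => exact hx1 j)
      (by
        rw [Fintype.sum_option]
        simp)
      (by
        intro o _
        cases o with
        | none => exact h0
        | some j =>
            by_cases hj : j = i
            · subst hj; simpa [hw] using hv
            · simpa [hw, hj] using hbasis j)
    rw [Fintype.sum_option] at this
    simpa using this
  -- volume comparison
  have hvol : ENNReal.ofReal (|v i| * (1 / n.factorial)) ≤ volume K := by
    have h1 : volume (f '' cornerSimplex n) ≤ volume K := measure_mono himg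
    rw [Measure.addHaar_image_linearMap, hdet, volume_cornerSimplex,
      ← ENNReal.ofReal_mul (abs_nonneg _)] at h1
    exact h1
  have hKfin : volume K ≠ ⊤ := hK.measure_lt_top.ne
  have h2 : |v i| * (1 / n.factorial) ≤ (volume K).toReal :=
    (ENNReal.ofReal_le_iff_le_toReal hKfin).1 hvol
  have hfac : (0:ℝ) < n.factorial := by positivity
  rw [mul_one_div, div_le_iff₀ hfac] at h2
  linarith [h2]
end

section
/- Let γ_1, …, γ_{k+1} ∈ ℝ satisfy ∑_{i=1}^{k+1} γ_i = 0 and ∑_{i=1}^k γ_i a_i = 0. Then for every integer m ≥ 1, the identity ∑_{i=1}^{k+1} γ_i (∂^m V/∂κ_i^m)(κ) = 0 holds for all κ ∈ ℝ^{k+3}. -/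
open MeasureTheory Finset
open scoped Pointwise Classical

noncomputable section

namespace ToricStmt

/-- The volume polynomial of the `Δ_k`-bundle over the `1`-simplex. -/
def Vbundle (k : ℕ) (a : Fin k → ℤ) (κ : Fin (k + 3) → ℝ) : ℝ :=
  (1 / (Nat.factorial k : ℝ)) * hF k a κ * (lamF k κ) ^ k -
  (1 / (Nat.factorial (k + 1) : ℝ)) * (∑ i, (a i : ℝ)) * (lamF k κ) ^ (k + 1)

/-- The `k`-th partial derivative `∂^k f / ∂κ_i^k` at `κ`. -/
def pder {N : ℕ} (k : ℕ) (i : Fin N) (f : (Fin N → ℝ) → ℝ) (κ : Fin N → ℝ) : ℝ :=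
  iteratedDeriv k (fun t => f (Function.update κ i t)) (κ i)

/-- The volume of `Δ(κ)` as a function of the support constants. -/
def volFn {n N : ℕ} (η : Fin N → Fin n → ℤ) (κ : Fin N → ℝ) : ℝ :=
  (volume (Delta η κ)).toReal

/-!
For `i ≤ k + 1`, moving `κ_i` by `u` moves `λ` by `u` and `h` by `c_i u`, where `c_i = a_i` for
`i ≤ k` and `c_{k+1} = 0`. As `V` is affine in `h`, along that coordinate line
`V = A(u) + c_i B(u)` with `A`, `B` independent of `i` (`bundleLine₀`, `bundleLine₁`; `c` is
`bundleSlope`), so `∂^m V/∂κ_i^m = A⁽ᵐ⁾(0) + c_i B⁽ᵐ⁾(0)`,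
and the two hypotheses `∑ γ_i = 0`, `∑ γ_i c_i = 0` kill both terms.
-/

theorem update_eq_add_single {ι M : Type*} [DecidableEq ι] [AddCommGroup M] (f : ι → M) (i : ι)
    (b : M) : Function.update f i b = f + Pi.single i (b - f i) := by
  ext j
  by_cases h : j = i <;> simp [h, add_sub_cancel]

theorem pder_eq_iteratedDeriv_of_update {N : ℕ} (m : ℕ) (i : Fin N) (f : (Fin N → ℝ) → ℝ)
    (κ : Fin N → ℝ) (F : ℝ → ℝ) (hF : ∀ t, f (Function.update κ i t) = F (t - κ i)) :
    pder m i f κ = iteratedDeriv m F 0 := by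
  simp only [pder, hF, iteratedDeriv_comp_sub_const, sub_self]

theorem sum_mul_pder_eq_zero {N n : ℕ} (m : ℕ) (f : (Fin N → ℝ) → ℝ) (κ : Fin N → ℝ)
    (p : Fin n → Fin N) (γ c : Fin n → ℝ) {A B : ℝ → ℝ} (hA : ContDiff ℝ m A)
    (hB : ContDiff ℝ m B)
    (hf : ∀ i t, f (Function.update κ (p i) t) = A (t - κ (p i)) + c i * B (t - κ (p i)))
    (hγ : ∑ i, γ i = 0) (hγc : ∑ i, γ i * c i = 0) :
    ∑ i, γ i * pder m (p i) f κ = 0 := by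
  have hder : ∀ i, pder m (p i) f κ = iteratedDeriv m A 0 + c i * iteratedDeriv m B 0 := by
    intro i
    rw [pder_eq_iteratedDeriv_of_update m (p i) f κ (fun u => A u + c i * B u) (hf i),
      iteratedDeriv_fun_add hA.contDiffAt (contDiff_const.mul hB).contDiffAt,
      iteratedDeriv_const_mul _ hB.contDiffAt]
  simp_rw [hder, mul_add, ← mul_assoc, sum_add_distrib, ← sum_mul, hγ, hγc, zero_mul, add_zero]

section Bundle

variable (k : ℕ) (a : Fin k → ℤ)

def bundleSlope : Fin (k + 1) → ℝ := Fin.snoc (α := fun _ => ℝ) (fun i => (a i : ℝ)) 0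

theorem lamF_add (κ v : Fin (k + 3) → ℝ) : lamF k (κ + v) = lamF k κ + lamF k v := by
  simp [lamF, sum_add_distrib]

theorem hF_add (κ v : Fin (k + 3) → ℝ) : hF k a (κ + v) = hF k a κ + hF k a v := by
  simp only [hF, Pi.add_apply, mul_add, sum_add_distrib]
  ring

theorem lamF_single (h : k + 1 ≤ k + 3) (i : Fin (k + 1)) (s : ℝ) :
    lamF k (Pi.single (Fin.castLE h i) s) = s := by
  simp [lamF, Pi.single_apply]

theorem hF_single (h : k + 1 ≤ k + 3) (i : Fin (k + 1)) (s : ℝ) :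
    hF k a (Pi.single (Fin.castLE h i) s) = bundleSlope k a i * s := by
  induction i using Fin.lastCases with
  | last =>
    have hne : ∀ j : Fin k, (j : ℕ) ≠ k := fun j => j.isLt.ne
    simp [hF, bundleSlope, Fin.ext_iff, hne]
  | cast i =>
    have h₁ : k + 1 ≠ i := by omega
    have h₂ : k + 2 ≠ i := by omega
    simp [hF, bundleSlope, Pi.single_apply, Fin.ext_iff, h₁, h₂]
    simp [← Fin.ext_iff]

theorem lamF_update (h : k + 1 ≤ k + 3) (κ : Fin (k + 3) → ℝ) (i : Fin (k + 1)) (t : ℝ) :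
    lamF k (Function.update κ (Fin.castLE h i) t) = lamF k κ + (t - κ (Fin.castLE h i)) := by
  rw [update_eq_add_single, lamF_add, lamF_single]

theorem hF_update (h : k + 1 ≤ k + 3) (κ : Fin (k + 3) → ℝ) (i : Fin (k + 1)) (t : ℝ) :
    hF k a (Function.update κ (Fin.castLE h i) t)
      = hF k a κ + bundleSlope k a i * (t - κ (Fin.castLE h i)) := by
  rw [update_eq_add_single, hF_add, hF_single]

def bundleLine₀ (κ : Fin (k + 3) → ℝ) (u : ℝ) : ℝ :=
  (1 / (Nat.factorial k : ℝ)) * hF k a κ * (lamF k κ + u) ^ k -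
  (1 / (Nat.factorial (k + 1) : ℝ)) * (∑ i, (a i : ℝ)) * (lamF k κ + u) ^ (k + 1)

def bundleLine₁ (κ : Fin (k + 3) → ℝ) (u : ℝ) : ℝ :=
  (1 / (Nat.factorial k : ℝ)) * u * (lamF k κ + u) ^ k

theorem Vbundle_update (h : k + 1 ≤ k + 3) (κ : Fin (k + 3) → ℝ) (i : Fin (k + 1)) (t : ℝ) :
    Vbundle k a (Function.update κ (Fin.castLE h i) t)
      = bundleLine₀ k a κ (t - κ (Fin.castLE h i))
        + bundleSlope k a i * bundleLine₁ k κ (t - κ (Fin.castLE h i)) := by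
  rw [Vbundle, lamF_update, hF_update, bundleLine₀, bundleLine₁]
  ring

theorem contDiff_bundleLine₀ (κ : Fin (k + 3) → ℝ) (n : WithTop ℕ∞) :
    ContDiff ℝ n (bundleLine₀ k a κ) := by
  unfold bundleLine₀
  fun_prop

theorem contDiff_bundleLine₁ (κ : Fin (k + 3) → ℝ) (n : WithTop ℕ∞) :
    ContDiff ℝ n (bundleLine₁ k κ) := by
  unfold bundleLine₁
  fun_prop

theorem sum_mul_bundleSlope (γ : Fin (k + 1) → ℝ) :
    ∑ i, γ i * bundleSlope k a i = ∑ i : Fin k, γ (Fin.castSucc i) * (a i : ℝ) := by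
  simp [Fin.sum_univ_castSucc, bundleSlope]

end Bundle

/-- For the volume polynomial `V` of the `Δ_k`-bundle over the
`1`-simplex determined by `a`, if `∑ γ_i = 0` and `∑ γ_i a_i = 0`, then
`∑ γ_i ∂^m V / ∂κ_i^m = 0` for every `m ≥ 1`. -/
theorem stmt18 (k : ℕ) (a : Fin k → ℤ) (γ : Fin (k + 1) → ℝ)
    (h1 : ∑ i, γ i = 0)
    (h2 : ∑ i : Fin k, γ (Fin.castLE (by omega) i) * (a i : ℝ) = 0) :
    ∀ m : ℕ, 1 ≤ m → ∀ κ : Fin (k + 3) → ℝ,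
      ∑ i : Fin (k + 1), γ i * pder m (Fin.castLE (by omega) i) (Vbundle k a) κ = 0 := by
  intro m _ κ
  exact sum_mul_pder_eq_zero m (Vbundle k a) κ _ γ (bundleSlope k a)
    (contDiff_bundleLine₀ k a κ m) (contDiff_bundleLine₁ k κ m) (Vbundle_update k a _ κ) h1
    ((sum_mul_bundleSlope k a γ).trans h2)

end ToricStmt
end
end
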